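/- There exists an integer k_0 such that for all k ≥ k_0 the following holds. Let q ∈ [0,1) (with the convention 0·ln 0 = 0), u0 = q·2^{−k}, and let γ0, η0 ∈ (0,1) satisfy the defining equations. If 0 < r ≤ 2^k·ln 2/(1 − q + q·ln q), then G_r''(1/2) < 0 and G_r is strictly decreasing on the interval [1/2, 1 − 3·ln k/k]. -/

import Mathlib

set_option maxHeartbeats 1000000


open Finset Filter Real

noncomputable section

/-- `f(α,γ,η)` from eq. (7) of the paper (with the given `u₀`). -/
def ff (k : ℕ) (u0 α γ η : ℝ) : ℝ :=
  η ^ (-(2*u0)) *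
    ((α * ((γ^2 + (γ^2)⁻¹)/2) + 1 - α)^k
      - 2*(1-η) * ((α * (γ^2)⁻¹ + (1-α))/2)^k
      + (1-η)^2 * (α * (γ^2)⁻¹/2)^k)

/-- `g_r(α,γ,η) = f(α,γ,η)^r / (α^α (1−α)^{1−α})`, with `0^0 = 1`
(automatic for `Real.rpow`). -/
def gg (k : ℕ) (u0 r α γ η : ℝ) : ℝ :=
  ff k u0 α γ η ^ r / (α ^ α * (1-α) ^ (1-α))

/-- `G_r(α)`: equals `g_r(α,γ₀,η₀)` for `α ∈ [3 ln k/k, 1 − 3 ln k/k]`, and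
`g_r(α,√γ₀,√η₀)` otherwise. -/
def G (k : ℕ) (u0 r γ0 η0 α : ℝ) : ℝ :=
  if 3 * Real.log k / k ≤ α ∧ α ≤ 1 - 3 * Real.log k / k then
    gg k u0 r α γ0 η0
  else
    gg k u0 r α (Real.sqrt γ0) (Real.sqrt η0)

/-- `φ(q) = (1 − √q)²/(1 − q + q ln q)`. -/
def phiQ (q : ℝ) : ℝ := (1 - Real.sqrt q)^2 / (1 - q + q * Real.log q)

/-- `t_k = (2^k ln 2/(1 − q + q ln q)) (1 − 20 k 2^{−k φ(q)})`. -/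
def tk (k : ℕ) (q : ℝ) : ℝ :=
  (2^k * Real.log 2 / (1 - q + q * Real.log q)) *
    (1 - 20 * k * (2:ℝ) ^ (-((k:ℝ) * phiQ q)))

def ppA (k : ℕ) (z dη α : ℝ) : ℝ :=
  (α * ((z + z⁻¹)/2) + 1 - α)^k - 2*dη * ((α * z⁻¹ + (1-α))/2)^k
    + dη^2 * (α * z⁻¹/2)^k

def dppA (k : ℕ) (z dη α : ℝ) : ℝ :=
  ((z + z⁻¹)/2 - 1) * ((k:ℝ) * (α * ((z + z⁻¹)/2) + 1 - α)^(k-1))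
  - 2*dη * ((z⁻¹ - 1)/2 * ((k:ℝ) * ((α * z⁻¹ + (1-α))/2)^(k-1)))
  + dη^2 * (z⁻¹/2 * ((k:ℝ) * (α * z⁻¹/2)^(k-1)))

def ddppA (k : ℕ) (z dη α : ℝ) : ℝ :=
  ((z + z⁻¹)/2 - 1)^2 * ((k:ℝ) * (((k-1:ℕ)):ℝ) * (α * ((z + z⁻¹)/2) + 1 - α)^(k-2))
  - 2*dη * (((z⁻¹ - 1)/2)^2 * ((k:ℝ) * (((k-1:ℕ)):ℝ) * ((α * z⁻¹ + (1-α))/2)^(k-2)))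
  + dη^2 * ((z⁻¹/2)^2 * ((k:ℝ) * (((k-1:ℕ)):ℝ) * (α * z⁻¹/2)^(k-2)))

lemma hasDerivAt_ppA (k : ℕ) (z dη α : ℝ) :
    HasDerivAt (ppA k z dη) (dppA k z dη α) α := by
  have h1 : HasDerivAt (fun α : ℝ => α * ((z + z⁻¹)/2) + 1 - α) ((z + z⁻¹)/2 - 1) α := by
    simpa using (((hasDerivAt_id α).mul_const ((z + z⁻¹)/2)).add_const 1).fun_sub (hasDerivAt_id α)
  have h2 : HasDerivAt (fun α : ℝ => (α * z⁻¹ + (1-α))/2) ((z⁻¹ - 1)/2) α := by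
    have := (((hasDerivAt_id α).mul_const z⁻¹).fun_add
      ((hasDerivAt_const α 1).fun_sub (hasDerivAt_id α))).div_const 2
    simpa [sub_eq_add_neg] using this
  have h3 : HasDerivAt (fun α : ℝ => α * z⁻¹/2) (z⁻¹/2) α := by
    simpa using ((hasDerivAt_id α).mul_const z⁻¹).div_const 2
  have H := ((h1.fun_pow k).fun_sub ((h2.fun_pow k).const_mul (2*dη))).fun_add ((h3.fun_pow k).const_mul (dη^2))
  refine H.congr_deriv ?_
  unfold dppA
  ring

lemma hasDerivAt_dppA (k : ℕ) (z dη α : ℝ) :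
    HasDerivAt (dppA k z dη) (ddppA k z dη α) α := by
  have h1 : HasDerivAt (fun α : ℝ => α * ((z + z⁻¹)/2) + 1 - α) ((z + z⁻¹)/2 - 1) α := by
    simpa using (((hasDerivAt_id α).mul_const ((z + z⁻¹)/2)).add_const 1).fun_sub (hasDerivAt_id α)
  have h2 : HasDerivAt (fun α : ℝ => (α * z⁻¹ + (1-α))/2) ((z⁻¹ - 1)/2) α := by
    have := (((hasDerivAt_id α).mul_const z⁻¹).fun_add
      ((hasDerivAt_const α 1).fun_sub (hasDerivAt_id α))).div_const 2
    simpa [sub_eq_add_neg] using this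
  have h3 : HasDerivAt (fun α : ℝ => α * z⁻¹/2) (z⁻¹/2) α := by
    simpa using ((hasDerivAt_id α).mul_const z⁻¹).div_const 2
  have H := (((h1.fun_pow (k-1)).const_mul ((k:ℝ))).const_mul ((z + z⁻¹)/2 - 1) |>.fun_sub
      ((((h2.fun_pow (k-1)).const_mul ((k:ℝ))).const_mul ((z⁻¹ - 1)/2)).const_mul (2*dη))).fun_add
      ((((h3.fun_pow (k-1)).const_mul ((k:ℝ))).const_mul (z⁻¹/2)).const_mul (dη^2))
  have hfun : dppA k z dη = fun α => ((z + z⁻¹)/2 - 1) * ((k:ℝ) * (α * ((z + z⁻¹)/2) + 1 - α)^(k-1)) - 2*dη * ((z⁻¹ - 1)/2 * ((k:ℝ) * ((α * z⁻¹ + (1-α))/2)^(k-1))) + dη^2 * (z⁻¹/2 * ((k:ℝ) * (α * z⁻¹/2)^(k-1))) := rfl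
  refine H.congr_deriv ?_
  unfold ddppA
  have h12 : k - 1 - 1 = k - 2 := by omega
  rw [h12]
  ring

lemma pow_sub_pow_le (a u : ℝ) (ha : 0 ≤ a) (hau : a ≤ u) :
    ∀ n : ℕ, u^(n+1) - a^(n+1) ≤ (n+1) * u^n * (u - a) := by
  intro n
  induction n with
  | zero => simp
  | succ n ih =>
    have hu : 0 ≤ u := le_trans ha hau
    have han : a^(n+1) ≤ u^(n+1) := pow_le_pow_left₀ ha hau _
    have h1 : u^(n+2) - a^(n+2) = u * (u^(n+1) - a^(n+1)) + a^(n+1) * (u - a) := by ring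
    rw [h1]
    have h2 : u * (u^(n+1) - a^(n+1)) ≤ u * ((n+1) * u^n * (u - a)) :=
      mul_le_mul_of_nonneg_left ih hu
    have h3 : a^(n+1) * (u - a) ≤ u^(n+1) * (u - a) :=
      mul_le_mul_of_nonneg_right han (by linarith)
    have : u * ((n+1) * u^n * (u - a)) + u^(n+1) * (u - a) = ((n:ℝ)+1+1) * u^(n+1) * (u-a) := by
      ring
    push_cast
    nlinarith [h2, h3]

lemma nat_pow4_le_two_pow {k : ℕ} (hk : 16 ≤ k) : (k:ℝ)^4 ≤ 2^k := by
  have h : k^4 ≤ 2^k := by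
    induction k with
    | zero => omega
    | succ n ih =>
      rcases Nat.lt_or_ge n 16 with h16 | h16
      · have hn15 : n = 15 := by omega
        subst hn15; norm_num
      · have hn := ih (by omega)
        have h1 : 6*n^2 + 4*n + 1 ≤ 11*n^3 := by nlinarith
        have : (n+1)^4 ≤ 2 * n^4 := by nlinarith
        calc (n+1)^4 ≤ 2 * n^4 := this
          _ ≤ 2 * 2^n := by omega
          _ = 2^(n+1) := by ring
  calc ((k:ℝ))^4 = ((k^4 : ℕ) : ℝ) := by push_cast; ring
    _ ≤ ((2^k : ℕ) : ℝ) := by exact_mod_cast h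
    _ = 2^k := by push_cast; ring


lemma entropy_lb {q : ℝ} (hq0 : 0 ≤ q) (hq1 : q < 1) :
    (1-q)^2/2 ≤ 1 - q + q * Real.log q := by
  rcases eq_or_lt_of_le hq0 with h0 | h0
  · rw [← h0]
    simp [Real.log_zero]
    norm_num
  · set F : ℝ → ℝ := fun x => 1 - x + x * Real.log x - (1-x)^2/2 with hF
    have hcont : ContinuousOn F (Set.Icc q 1) := by
      apply Continuous.continuousOn
      exact ((continuous_const.sub continuous_id).add Real.continuous_mul_log).sub
        ((((continuous_const.sub continuous_id).pow 2)).div_const 2)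
    have hderiv : ∀ x ∈ interior (Set.Icc q 1), deriv F x < 0 := by
      intro x hx
      rw [interior_Icc] at hx
      obtain ⟨hxq, hx1⟩ := hx
      have hx0 : 0 < x := lt_trans h0 hxq
      have hD : HasDerivAt F (Real.log x + 1 - x) x := by
        have hd1 : HasDerivAt (fun x : ℝ => 1 - x) (-1 : ℝ) x := by
          simpa using (hasDerivAt_const x (1:ℝ)).fun_sub (hasDerivAt_id x)
        have hd2 := Real.hasDerivAt_mul_log (ne_of_gt hx0)
        have hd3 : HasDerivAt (fun x : ℝ => (1-x)^2/2) (-(1-x)) x := by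
          have := (hd1.fun_pow 2).div_const 2
          refine this.congr_deriv ?_
          simp
          ring
        have := (hd1.fun_add hd2).fun_sub hd3
        refine this.congr_deriv ?_
        ring
      rw [hD.deriv]
      have := Real.log_lt_sub_one_of_pos hx0 (ne_of_lt hx1)
      linarith
    have hanti := strictAntiOn_of_deriv_neg (convex_Icc q 1) hcont hderiv
    have hq1' := hanti (Set.mem_Icc.mpr ⟨le_refl q, le_of_lt hq1⟩)
      (Set.mem_Icc.mpr ⟨le_of_lt hq1, le_refl 1⟩) hq1
    have hF1 : F 1 = 0 := by simp [hF]
    have : 0 < F q := by linarith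
    simp only [hF] at this
    linarith

lemma log_ratio_lb {α : ℝ} (h1 : 1/2 < α) (h2 : α < 1) :
    4*(α - 1/2)/3 ≤ Real.log α - Real.log (1-α) := by
  have h1a : (0:ℝ) < 1 - α := by linarith
  have hα0 : (0:ℝ) < α := by linarith
  have hstep1 : Real.log α - Real.log (1-α) = Real.log (α/(1-α)) :=
    (Real.log_div (ne_of_gt hα0) (ne_of_gt h1a)).symm
  have hstep2 : (1 + 4*(α - 1/2)) ≤ α/(1-α) := by
    rw [le_div_iff₀ h1a]
    nlinarith
  have hstep3 : Real.log (1 + 4*(α - 1/2)) ≤ Real.log (α/(1-α)) :=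
    Real.log_le_log (by linarith) hstep2
  have hpos : (0:ℝ) < 1 + 4*(α - 1/2) := by linarith
  have hstep4 : 4*(α - 1/2)/(1+4*(α - 1/2)) ≤ Real.log (1+4*(α - 1/2)) := by
    have := Real.log_le_sub_one_of_pos (inv_pos.mpr hpos)
    rw [Real.log_inv] at this
    have h'' : 1 - (1+4*(α - 1/2))⁻¹ ≤ Real.log (1+4*(α - 1/2)) := by linarith
    have heq : 4*(α - 1/2)/(1+4*(α - 1/2)) = 1 - (1+4*(α - 1/2))⁻¹ := by
      rw [inv_eq_one_div, eq_sub_iff_add_eq, ← add_div,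
        div_eq_one_iff_eq (ne_of_gt hpos)]
      ring
    linarith [h'']
  have hstep5 : 4*(α - 1/2)/3 ≤ 4*(α - 1/2)/(1+4*(α - 1/2)) := by
    apply div_le_div_of_nonneg_left (by linarith) hpos (by linarith)
  linarith

lemma logk_le {k : ℕ} (hk : 512 ≤ k) : Real.log k ≤ (k:ℝ)/11 := by
  have hk0 : (0:ℝ) < k := by positivity
  have hkR : (512:ℝ) ≤ k := by exact_mod_cast hk
  have hs0 : 0 < Real.sqrt k := Real.sqrt_pos.mpr hk0
  have h1 : Real.log k = 2 * Real.log (Real.sqrt k) := by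
    rw [Real.log_sqrt (le_of_lt hk0)]
    ring
  have h2 : Real.log (Real.sqrt k) ≤ Real.sqrt k := by
    have := Real.log_le_sub_one_of_pos hs0
    linarith
  have h3 : Real.sqrt k ≤ (k:ℝ)/22 := by
    have h4 : (k:ℝ) ≤ ((k:ℝ)/22)^2 := by nlinarith
    calc Real.sqrt k ≤ Real.sqrt (((k:ℝ)/22)^2) := Real.sqrt_le_sqrt h4
      _ = (k:ℝ)/22 := Real.sqrt_sq (by positivity)
  rw [h1]
  linarith

lemma pow_le_exp_of_nonneg {x : ℝ} (hx : 0 ≤ x) (n : ℕ) :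
    (1+x)^n ≤ Real.exp ((n:ℝ)*x) := by
  have h := Real.add_one_le_exp x
  calc (1+x)^n ≤ (Real.exp x)^n := by
        apply pow_le_pow_left₀ (by linarith) (by linarith)
    _ = Real.exp ((n:ℝ)*x) := by rw [← Real.exp_nat_mul]


lemma dppA_eq {k : ℕ} {z : ℝ} (hz0 : z ≠ 0) (α : ℝ) :
    dppA k z ((1-z) * (1+z)^(k-1)) α = (k:ℝ) * (1-z)^2 / (2*z) *
      ((α * ((z + z⁻¹)/2) + 1 - α)^(k-1)
        - 2*((1+z)*((α * z⁻¹ + (1-α))/2))^(k-1)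
        + ((1+z)^2*(α * z⁻¹/2))^(k-1)) := by
  unfold dppA
  rw [mul_pow ((1:ℝ)+z) ((α * z⁻¹ + (1-α))/2) (k-1),
    mul_pow ((1+z)^2) (α * z⁻¹/2) (k-1),
    pow_right_comm (1+z) 2 (k-1)]
  field_simp
  ring

lemma dppA_half {k : ℕ} {z : ℝ} (hz0 : z ≠ 0) :
    dppA k z ((1-z) * (1+z)^(k-1)) (1/2) = 0 := by
  rw [dppA_eq hz0]
  have e1 : (1/2 * ((z + z⁻¹)/2) + 1 - 1/2 : ℝ) = (1+z)^2/(4*z) := by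
    field_simp
    ring
  have e2 : ((1+z)*((1/2 * z⁻¹ + (1-1/2))/2) : ℝ) = (1+z)^2/(4*z) := by
    field_simp
    ring
  have e3 : ((1+z)^2*(1/2 * z⁻¹/2) : ℝ) = (1+z)^2/(4*z) := by
    field_simp
    try ring
    try tauto
  rw [e1, e2, e3]
  ring


lemma w_bound {k : ℕ} (hk : 512 ≤ k) {z u0 q : ℝ} (hz0 : 0 < z) (hz1 : z < 1)
    (hq0 : 0 ≤ q) (hq1 : q < 1) (hu0 : u0 = q * ((2:ℝ)^k)⁻¹)
    (hBB : (1+z)^(k-1) * ((1-z) + 2*z*u0) = 1)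
    (hwlt : (1-z) * (1+z)^(k-1) < 1) :
    ((k:ℝ)-1)*(1-z) < 1 ∧ (1-z) ≤ 4*(1-q)/2^k := by
  have hcast : ((k-1:ℕ):ℝ) = (k:ℝ)-1 := by
    have h1k : 1 ≤ k := by omega
    push_cast [Nat.cast_sub h1k]
    ring
  have hkR : (512:ℝ) ≤ (k:ℝ) := by exact_mod_cast hk
  have hk4 : (k:ℝ)^4 ≤ 2^k := nat_pow4_le_two_pow (by omega)
  have hXpos : (0:ℝ) < (1+z)^(k-1) := by positivity
  have hXber : 1 + ((k:ℝ)-1)*z ≤ (1+z)^(k-1) := by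
    have := one_add_mul_le_pow (a := z) (by linarith) (k-1)
    rw [hcast] at this
    exact this
  have h1 : ((k:ℝ)-1)*(1-z) < 1 := by
    have hprod : (1-z) * (1 + ((k:ℝ)-1)*z) ≤ (1-z) * (1+z)^(k-1) :=
      mul_le_mul_of_nonneg_left hXber (by linarith)
    nlinarith [hz0, hprod, hwlt]
  have ht0 : 0 ≤ ((k:ℝ)-1)*(1-z) := by
    apply mul_nonneg <;> linarith
  have h2k1pos : (0:ℝ) < 2^(k-1) := by positivity
  have hXlow : (2:ℝ)^(k-1) * (1 - ((k:ℝ)-1)*(1-z)/2) ≤ (1+z)^(k-1) := by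
    have hsplit : ((1:ℝ)+z) = 2*(1-(1-z)/2) := by ring
    rw [hsplit, mul_pow]
    have hbern : 1 + ((k:ℝ)-1) * (-(1-z)/2) ≤ (1 + (-(1-z)/2))^(k-1) := by
      have := one_add_mul_le_pow (a := -(1-z)/2) (by linarith) (k-1)
      rw [hcast] at this
      exact this
    have h2 : (1 - ((k:ℝ)-1)*(1-z)/2) ≤ (1 - (1-z)/2)^(k-1) := by
      have he : (1 + (-(1-z)/2)) = (1 - (1-z)/2) := by ring
      rw [he] at hbern
      calc (1 - ((k:ℝ)-1)*(1-z)/2) = 1 + ((k:ℝ)-1) * (-(1-z)/2) := by ring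
        _ ≤ _ := hbern
    exact mul_le_mul_of_nonneg_left h2 (le_of_lt h2k1pos)
  have hXc : (2:ℝ)^(k-1) ≤ (1+z)^(k-1) * (1 + ((k:ℝ)-1)*(1-z)) := by
    have hstep : (2:ℝ)^(k-1) * (1 - ((k:ℝ)-1)*(1-z)/2) * (1 + ((k:ℝ)-1)*(1-z))
        ≤ (1+z)^(k-1) * (1 + ((k:ℝ)-1)*(1-z)) :=
      mul_le_mul_of_nonneg_right hXlow (by linarith)
    nlinarith [hstep, ht0, h1, h2k1pos, mul_nonneg ht0 (sub_nonneg.mpr (le_of_lt h1))]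
  have hrecip : (1-z) + 2*z*u0 ≤ (1 + ((k:ℝ)-1)*(1-z)) / 2^(k-1) := by
    have hS : (1-z) + 2*z*u0 = 1/((1+z)^(k-1)) := by
      field_simp
      linarith [hBB]
    rw [hS, div_le_div_iff₀ hXpos h2k1pos]
    linarith [hXc]
  have hY2 : (2:ℝ)^k = 2^(k-1) * 2 := by
    rw [← pow_succ]
    congr 1
    omega
  have hcube : (4:ℝ) ≤ (k:ℝ)^3 := by
    calc (4:ℝ) ≤ 512^3 := by norm_num
      _ ≤ (k:ℝ)^3 := pow_le_pow_left₀ (by norm_num) hkR 3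
  have h4k : 4*(k:ℝ) ≤ (k:ℝ)^4 := by
    have := mul_le_mul_of_nonneg_right hcube (show (0:ℝ) ≤ (k:ℝ) by positivity)
    nlinarith [this]
  have hkY2 : 2*(k:ℝ) ≤ (2:ℝ)^(k-1) := by linarith [h4k, hk4, hY2.symm.le, hY2.le]
  constructor
  · exact h1
  · -- main bound
    have hu0' : u0 * (2^(k-1) * 2) = q := by
      rw [hu0, ← hY2]
      field_simp
    have hmul := mul_le_mul_of_nonneg_right hrecip (le_of_lt h2k1pos)
    rw [div_mul_cancel₀ _ (ne_of_gt h2k1pos)] at hmul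
    -- hmul : ((1-z) + 2*z*u0) * 2^(k-1) ≤ 1 + (k-1)*(1-z)
    -- i.e. (1-z)*Y + z*q ≤ 1 + (k-1)*(1-z)
    have hzq : 2*z*u0 * 2^(k-1) = z*q := by
      calc 2*z*u0 * 2^(k-1) = z * (u0 * (2^(k-1)*2)) := by ring
        _ = z*q := by rw [hu0']
    have hmul2 : (1-z) * 2^(k-1) + z*q ≤ 1 + ((k:ℝ)-1)*(1-z) := by
      calc (1-z) * 2^(k-1) + z*q = ((1-z) + 2*z*u0)*2^(k-1) := by rw [← hzq]; ring
        _ ≤ 1 + ((k:ℝ)-1)*(1-z) := hmul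
    have hw0 : (0:ℝ) ≤ 1 - z := by linarith
    have hq1z : q*(1-z) ≤ 1-z := mul_le_of_le_one_left hw0 (le_of_lt hq1)
    have hgoal : (1-z) * 2^(k-1) ≤ 2*(1-q) := by
      have hh := mul_le_mul_of_nonneg_right hkY2 hw0
      linarith [hmul2, hh, hq1z]
    rw [hY2, le_div_iff₀ (by positivity)]
    linarith [hgoal]


lemma z_facts {k : ℕ} (hk : 512 ≤ k) {z : ℝ} (hz0 : 0 < z) (hz1 : z < 1)
    (hw : (1-z) ≤ 4/2^k) :
    3/4 ≤ z ∧ (1/2:ℝ) ≤ z^k ∧ z⁻¹ ≤ 2 ∧ ((1+z)^2/(4*z))^(k-2) ≤ 3 := by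
  have hkR : (512:ℝ) ≤ (k:ℝ) := by exact_mod_cast hk
  have hkpos : (0:ℝ) < (k:ℝ) := by linarith
  have hk4 : (k:ℝ)^4 ≤ 2^k := nat_pow4_le_two_pow (by omega)
  have h2k : (0:ℝ) < 2^k := by positivity
  have hk3 : (512:ℝ)^3 ≤ (k:ℝ)^3 := pow_le_pow_left₀ (by norm_num) hkR 3
  have hk4pos : (0:ℝ) < (k:ℝ)^4 := by positivity
  have hw2 : 4/(2:ℝ)^k ≤ 4/(k:ℝ)^4 := by
    apply div_le_div_of_nonneg_left (by norm_num) hk4pos hk4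
  have hkw : (k:ℝ)*(1-z) ≤ 1/2 := by
    have h1 : (k:ℝ)*(1-z) ≤ (k:ℝ)*(4/(k:ℝ)^4) :=
      mul_le_mul_of_nonneg_left (le_trans hw hw2) (le_of_lt hkpos)
    have h3 : (k:ℝ)*(4/(k:ℝ)^4) = 4/(k:ℝ)^3 := by field_simp
    have h4 : 4/(k:ℝ)^3 ≤ 1/2 := by
      rw [div_le_div_iff₀ (by positivity) (by norm_num)]
      nlinarith [hk3]
    linarith
  have hz34 : 3/4 ≤ z := by
    have h16 : (16:ℝ) ≤ 2^k := by
      have : (16:ℝ) ≤ (k:ℝ)^4 := by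
        calc (16:ℝ) ≤ 512^4 := by norm_num
          _ ≤ (k:ℝ)^4 := pow_le_pow_left₀ (by norm_num) hkR 4
      linarith
    have : 4/(2:ℝ)^k ≤ 1/4 := by
      rw [div_le_div_iff₀ h2k (by norm_num)]
      linarith
    linarith [hw]
  have hzk : (1/2:ℝ) ≤ z^k := by
    have hbern := one_add_mul_le_pow (a := z-1) (by linarith) k
    rw [show (1:ℝ)+(z-1) = z by ring] at hbern
    nlinarith [hbern, hkw]
  have hzinv : z⁻¹ ≤ 2 := by
    rw [inv_le_comm₀ (by linarith) (by norm_num)]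
    linarith
  refine ⟨hz34, hzk, hzinv, ?_⟩
  -- P^(k-2) ≤ 3
  have hPpos : (0:ℝ) ≤ (1+z)^2/(4*z) := by positivity
  have hPle : (1+z)^2/(4*z) ≤ 1 + (1-z)^2 := by
    rw [div_le_iff₀ (by linarith)]
    nlinarith [sq_nonneg (1-z), hz34]
  have hcast2 : ((k-2:ℕ):ℝ) ≤ (k:ℝ) := by exact_mod_cast Nat.sub_le k 2
  have hw0 : (0:ℝ) ≤ 1-z := by linarith
  have h16k : 16*(k:ℝ) ≤ ((k:ℝ)^4)^2 := by
    have e1 : (16:ℝ) ≤ (k:ℝ)^3 := by nlinarith [hk3]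
    have e2 : 16*(k:ℝ) ≤ (k:ℝ)^3*(k:ℝ) := mul_le_mul_of_nonneg_right e1 (le_of_lt hkpos)
    have e3 : (k:ℝ)^3*(k:ℝ) = (k:ℝ)^4 := by ring
    have e4 : (1:ℝ) ≤ (k:ℝ)^4 := by
      calc (1:ℝ) ≤ 512^4 := by norm_num
        _ ≤ (k:ℝ)^4 := pow_le_pow_left₀ (by norm_num) hkR 4
    have e5 : 16*(k:ℝ) ≤ (k:ℝ)^4 := by rw [← e3]; exact e2
    have e6 : (k:ℝ)^4 ≤ ((k:ℝ)^4)^2 := by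
      calc (k:ℝ)^4 = 1*(k:ℝ)^4 := by ring
        _ ≤ (k:ℝ)^4*(k:ℝ)^4 := mul_le_mul_of_nonneg_right e4 (by positivity)
        _ = ((k:ℝ)^4)^2 := by ring
    linarith
  have hsq : ((k:ℝ)^4)^2 ≤ ((2:ℝ)^k)^2 := pow_le_pow_left₀ (le_of_lt hk4pos) hk4 2
  have hz2 : (1-z)^2 ≤ 16/((2:ℝ)^k)^2 := by
    have := pow_le_pow_left₀ hw0 hw 2
    calc (1-z)^2 ≤ (4/(2:ℝ)^k)^2 := this
      _ = 16/((2:ℝ)^k)^2 := by rw [div_pow]; norm_num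
  have hexp_arg : ((k-2:ℕ):ℝ)*(1-z)^2 ≤ 1 := by
    have h1 : ((k-2:ℕ):ℝ)*(1-z)^2 ≤ (k:ℝ)*(16/((2:ℝ)^k)^2) := by
      apply mul_le_mul hcast2 hz2 (sq_nonneg _) (le_of_lt hkpos)
    have h2 : (k:ℝ)*(16/((2:ℝ)^k)^2) ≤ 1 := by
      rw [mul_div_assoc'] 
      rw [div_le_one (by positivity)]
      calc (k:ℝ)*16 = 16*(k:ℝ) := by ring
        _ ≤ ((k:ℝ)^4)^2 := h16k
        _ ≤ ((2:ℝ)^k)^2 := hsq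
    linarith
  calc ((1+z)^2/(4*z))^(k-2) ≤ (1 + (1-z)^2)^(k-2) := pow_le_pow_left₀ hPpos hPle _
    _ ≤ Real.exp (((k-2:ℕ):ℝ)*(1-z)^2) := pow_le_exp_of_nonneg (sq_nonneg _) _
    _ ≤ Real.exp 1 := Real.exp_le_exp.mpr hexp_arg
    _ ≤ 3 := by linarith [Real.exp_one_lt_d9]

lemma ppA_ge_half {k : ℕ} (hk : 512 ≤ k) {z dη α : ℝ} (hz0 : 0 < z) (hz1 : z < 1)
    (hdη0 : 0 ≤ dη) (hdηle : dη ≤ (1-z) * 2^(k-1))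
    (hw : (1-z) ≤ 4/2^k)
    (hα0 : 0 ≤ α) (hα1 : α ≤ 1) :
    1/2 ≤ ppA k z dη α := by
  obtain ⟨hz34, hzk, hzinv, _⟩ := z_facts hk hz0 hz1 hw
  have hkR : (512:ℝ) ≤ (k:ℝ) := by exact_mod_cast hk
  have hk4 : (k:ℝ)^4 ≤ 2^k := nat_pow4_le_two_pow (by omega)
  have h2k : (0:ℝ) < 2^k := by positivity
  have hzipos : (0:ℝ) < z⁻¹ := inv_pos.mpr hz0
  have hzi1 : (1:ℝ) ≤ z⁻¹ := by
    rw [le_inv_comm₀ (by norm_num) hz0]; linarith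
  have hcc : 1 ≤ (z+z⁻¹)/2 := by
    have hkey : z + z⁻¹ - 2 = (1-z)^2 * z⁻¹ := by field_simp; ring
    nlinarith [sq_nonneg (1-z), hzipos, hkey, mul_nonneg (sq_nonneg (1-z)) (le_of_lt hzipos)]
  have hbase1 : 1 ≤ α * ((z + z⁻¹)/2) + 1 - α := by nlinarith [hcc, hα0]
  have hbase1k : 1 ≤ (α * ((z + z⁻¹)/2) + 1 - α)^k := by
    calc (1:ℝ) = 1^k := (one_pow k).symm
      _ ≤ _ := pow_le_pow_left₀ zero_le_one hbase1 k
  have hterm3 : 0 ≤ dη^2 * (α * z⁻¹/2)^k := by positivity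
  have hb2nonneg : 0 ≤ (α * z⁻¹ + (1-α))/2 := by
    apply div_nonneg _ (by norm_num)
    nlinarith [hzipos, hα0, hα1]
  have hb2le : (α * z⁻¹ + (1-α))/2 ≤ z⁻¹/2 := by
    have hnum : α*z⁻¹ + (1-α) ≤ z⁻¹ := by nlinarith [hzi1, hα1, hα0]
    linarith
  have h16 : (16:ℝ) ≤ 2^k := by
    have : (16:ℝ) ≤ (k:ℝ)^4 := by
      calc (16:ℝ) ≤ 512^4 := by norm_num
        _ ≤ (k:ℝ)^4 := pow_le_pow_left₀ (by norm_num) hkR 4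
    linarith
  have hb2k : ((α * z⁻¹ + (1-α))/2)^k ≤ 2/2^k := by
    have h1 : ((α * z⁻¹ + (1-α))/2)^k ≤ (z⁻¹/2)^k := pow_le_pow_left₀ hb2nonneg hb2le k
    have h2 : (z⁻¹/2 : ℝ)^k = (z^k)⁻¹/2^k := by rw [div_pow, inv_pow]
    have hzkpos : (0:ℝ) < z^k := by positivity
    have h3 : (z^k)⁻¹ ≤ 2 := by
      rw [inv_le_comm₀ hzkpos (by norm_num)]
      linarith [hzk]
    calc ((α * z⁻¹ + (1-α))/2)^k ≤ (z⁻¹/2)^k := h1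
      _ = (z^k)⁻¹/2^k := h2
      _ ≤ 2/2^k := by apply div_le_div_of_nonneg_right h3 h2k.le
  have hY2 : (2:ℝ)^k = 2^(k-1)*2 := by
    rw [← pow_succ]; congr 1; omega
  have hw0 : (0:ℝ) ≤ 1-z := by linarith
  have hmid : 2*dη * ((α * z⁻¹ + (1-α))/2)^k ≤ 1/2 := by
    have h1 : 2*dη * ((α*z⁻¹+(1-α))/2)^k ≤ 2*((1-z)*2^(k-1)) * (2/2^k) := by
      apply mul_le_mul (by linarith [hdηle]) hb2k (pow_nonneg hb2nonneg k) (by positivity)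
    have h2 : 2*((1-z)*2^(k-1)) * (2/(2:ℝ)^k) = 2*(1-z) := by
      rw [hY2]; field_simp
    have h3 : 2*(1-z) ≤ 8/2^k := by
      have h8 : (8:ℝ)/2^k = 2*(4/2^k) := by ring
      rw [h8]; linarith [hw]
    have h4 : (8:ℝ)/(2:ℝ)^k ≤ 1/2 := by
      rw [div_le_div_iff₀ h2k (by norm_num)]
      linarith [h16]
    linarith [h1, h2.le, h2.ge, h3, h4]
  unfold ppA
  linarith [hbase1k, hterm3, hmid]


lemma alpha_pow_bound {k : ℕ} (hk : 512 ≤ k) {α : ℝ} (hα0 : 0 ≤ α)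
    (hαb : α ≤ 1 - 3*Real.log k/k) : α^(k-2) ≤ 2/(k:ℝ)^3 := by
  have hkR : (512:ℝ) ≤ (k:ℝ) := by exact_mod_cast hk
  have hkpos : (0:ℝ) < (k:ℝ) := by linarith
  have hlogpos : 0 < Real.log k := Real.log_pos (by linarith)
  have hlogk : Real.log k ≤ (k:ℝ)/11 := logk_le hk
  have hxpos : 0 < 3*Real.log k/k := by positivity
  have hxle : 3*Real.log k/k ≤ 3/11 := by
    rw [div_le_div_iff₀ hkpos (by norm_num)]
    nlinarith [hlogk, hkpos]
  have hb1 : 1 - 3*Real.log k/k ≤ Real.exp (-(3*Real.log k/k)) := by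
    have := Real.add_one_le_exp (-(3*Real.log k/k))
    linarith
  have hb0 : (0:ℝ) ≤ 1 - 3*Real.log k/k := by linarith
  have h1 : α^(k-2) ≤ (1 - 3*Real.log k/k)^(k-2) := pow_le_pow_left₀ hα0 hαb _
  have h2 : (1 - 3*Real.log k/k)^(k-2) ≤ (Real.exp (-(3*Real.log k/k)))^(k-2) :=
    pow_le_pow_left₀ hb0 hb1 _
  have h3 : (Real.exp (-(3*Real.log k/k)))^(k-2)
      = Real.exp (((k-2:ℕ):ℝ) * (-(3*Real.log k/k))) := by
    rw [← Real.exp_nat_mul]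
  have hcast : ((k-2:ℕ):ℝ) = (k:ℝ)-2 := by
    have : (2:ℕ) ≤ k := by omega
    push_cast [Nat.cast_sub this]
    ring
  have h4 : ((k-2:ℕ):ℝ) * (-(3*Real.log k/k)) = -(3*Real.log k) + 6*Real.log k/k := by
    rw [hcast]
    field_simp
    ring
  have h5a : Real.exp (-(3*Real.log k)) = (((k:ℝ))^3)⁻¹ := by
    rw [Real.exp_neg]
    congr 1
    rw [show (3:ℝ)*Real.log k = ((3:ℕ):ℝ)*Real.log k by norm_num, Real.exp_nat_mul,
      Real.exp_log hkpos]
  have h5 : Real.exp (-(3*Real.log k) + 6*Real.log k/k)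
      = Real.exp (6*Real.log k/k) * (((k:ℝ))^3)⁻¹ := by
    rw [Real.exp_add, h5a]
    ring
  have h6 : Real.exp (6*Real.log k/k) ≤ 2 := by
    have harg : 6*Real.log k/k ≤ Real.log 2 := by
      have h61 : 6*Real.log k/k ≤ 6/11 := by
        rw [div_le_div_iff₀ hkpos (by norm_num)]
        nlinarith [hlogk, hkpos]
      have h62 : (6:ℝ)/11 ≤ Real.log 2 := by
        have := Real.log_two_gt_d9
        norm_num at this ⊢
        linarith
      linarith
    calc Real.exp (6*Real.log k/k) ≤ Real.exp (Real.log 2) := Real.exp_le_exp.mpr harg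
      _ = 2 := Real.exp_log (by norm_num)
  calc α^(k-2) ≤ (Real.exp (-(3*Real.log k/k)))^(k-2) := le_trans h1 h2
    _ = Real.exp (((k-2:ℕ):ℝ) * (-(3*Real.log k/k))) := h3
    _ = Real.exp (6*Real.log k/k) * (((k:ℝ))^3)⁻¹ := by rw [h4, h5]
    _ ≤ 2 * (((k:ℝ))^3)⁻¹ := by
        apply mul_le_mul_of_nonneg_right h6 (by positivity)
    _ = 2/(k:ℝ)^3 := by rw [div_eq_mul_inv]

lemma rdpp_bound {k : ℕ} (hk : 512 ≤ k) {z r : ℝ} (hz0 : 0 < z) (hz1 : z < 1)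
    (hw : (1-z) ≤ 4/2^k) (hr0 : 0 < r) (hrw : r * (1-z)^2 ≤ 32/2^k)
    {α : ℝ} (hα : 1/2 < α) (hαb : α ≤ 1 - 3*Real.log k/k) (hα1 : α < 1) :
    r * dppA k z ((1-z)*(1+z)^(k-1)) α ≤ 96*(α - 1/2)/(k:ℝ) := by
  obtain ⟨hz34, hzk, hzinv, hP3⟩ := z_facts hk hz0 hz1 hw
  have hkR : (512:ℝ) ≤ (k:ℝ) := by exact_mod_cast hk
  have hkpos : (0:ℝ) < (k:ℝ) := by linarith
  have hzne : z ≠ 0 := ne_of_gt hz0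
  have hα0 : (0:ℝ) ≤ α := by linarith
  rw [dppA_eq hzne α]
  obtain ⟨A, hA⟩ : ∃ x, x = α * ((z + z⁻¹)/2) + 1 - α := ⟨_, rfl⟩
  obtain ⟨V, hV⟩ : ∃ x, x = (1+z)*((α * z⁻¹ + (1-α))/2) := ⟨_, rfl⟩
  obtain ⟨U, hU⟩ : ∃ x, x = (1+z)^2*(α * z⁻¹/2) := ⟨_, rfl⟩
  rw [← hA, ← hV, ← hU]
  have hzipos : (0:ℝ) < z⁻¹ := inv_pos.mpr hz0
  have hcc : 1 ≤ (z+z⁻¹)/2 := by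
    have hkey : z + z⁻¹ - 2 = (1-z)^2 * z⁻¹ := by field_simp; ring
    nlinarith [hkey, mul_nonneg (sq_nonneg (1-z)) (le_of_lt hzipos)]
  have hA1 : 1 ≤ A := by rw [hA]; nlinarith [hcc, hα0]
  have hA0 : 0 ≤ A := by linarith
  have hVA : V - A = (1-z)*(2*α-1)/2 := by rw [hV, hA]; field_simp; ring
  have hAV : A ≤ V := by
    nlinarith [hVA, mul_nonneg (by linarith : (0:ℝ) ≤ 1-z) (by linarith : (0:ℝ) ≤ 2*α-1)]
  have hUA : U - A = 2*α - 1 := by rw [hU, hA]; field_simp; ring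
  have hAU : A ≤ U := by nlinarith [hUA, hα]
  have hVm : A^(k-1) ≤ V^(k-1) := pow_le_pow_left₀ hA0 hAV _
  have hm : k - 1 = (k-2)+1 := by omega
  have hsub := pow_sub_pow_le A U hA0 hAU (k-2)
  rw [← hm] at hsub
  -- hsub : U^(k-1) - A^(k-1) ≤ (↑(k-2)+1) * U^(k-2) * (U - A)
  have hcast2 : ((k-2:ℕ):ℝ) + 1 ≤ (k:ℝ) := by
    have h1 : ((k-2:ℕ):ℝ) ≤ (k:ℝ) - 2 := by
      have : (2:ℕ) ≤ k := by omega
      rw [show ((k-2:ℕ):ℝ) = (k:ℝ)-2 by push_cast [Nat.cast_sub this]; ring]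
    linarith
  have hUP : U = 2*α*((1+z)^2/(4*z)) := by rw [hU]; field_simp; ring
  have hU0 : 0 ≤ U := by nlinarith [hAU, hA0]
  have hUk2 : U^(k-2) ≤ (2*α)^(k-2) * 3 := by
    rw [hUP, mul_pow]
    apply mul_le_mul_of_nonneg_left hP3 (by positivity)
  have hE : A^(k-1) - 2*V^(k-1) + U^(k-1) ≤ (k:ℝ) * ((2*α)^(k-2) * 3) * (2*α-1) := by
    have e1 : A^(k-1) - 2*V^(k-1) + U^(k-1) ≤ U^(k-1) - A^(k-1) := by linarith [hVm]
    have e2 : (((k-2:ℕ):ℝ)+1) * U^(k-2) * (U - A) ≤ (k:ℝ) * ((2*α)^(k-2) * 3) * (2*α-1) := by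
      rw [hUA]
      have hf1 : (((k-2:ℕ):ℝ)+1) * U^(k-2) ≤ (k:ℝ) * ((2*α)^(k-2) * 3) := by
        apply mul_le_mul hcast2 hUk2 (by positivity) (le_of_lt hkpos)
      apply mul_le_mul_of_nonneg_right hf1 (by linarith)
    linarith [hsub, e2]
  -- now multiply by the positive coefficient
  have hcoef : (0:ℝ) ≤ (k:ℝ)*(1-z)^2/(2*z) := by positivity
  have step1 : r * ((k:ℝ) * (1-z)^2 / (2*z) *
      (A^(k-1) - 2*V^(k-1) + U^(k-1)))
      ≤ r * ((k:ℝ) * (1-z)^2 / (2*z) * ((k:ℝ) * ((2*α)^(k-2) * 3) * (2*α-1))) := by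
    apply mul_le_mul_of_nonneg_left _ (le_of_lt hr0)
    apply mul_le_mul_of_nonneg_left hE hcoef
  have h2k4 : (2:ℝ)^k = 2^(k-2)*4 := by
    have hidx : (k-2)+2 = k := by omega
    calc (2:ℝ)^k = 2^((k-2)+2) := by rw [hidx]
      _ = 2^(k-2)*4 := by rw [pow_add]; norm_num
  have hαk : α^(k-2) ≤ 2/(k:ℝ)^3 := alpha_pow_bound hk hα0 hαb
  have step2 : r * ((k:ℝ) * (1-z)^2 / (2*z) * ((k:ℝ) * ((2*α)^(k-2) * 3) * (2*α-1)))
      ≤ (32/2^k) * ((k:ℝ) * ((k:ℝ) * ((2*α)^(k-2) * 3) * (2*α-1))) := by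
    have hrkz : r * ((k:ℝ)*(1-z)^2/(2*z)) ≤ (32/2^k) * (k:ℝ) := by
      have e1 : r * ((k:ℝ)*(1-z)^2/(2*z)) = (r*(1-z)^2) * ((k:ℝ)/(2*z)) := by ring
      have e2 : (k:ℝ)/(2*z) ≤ (k:ℝ) := by
        apply div_le_self (le_of_lt hkpos) (by linarith)
      rw [e1]
      apply mul_le_mul hrw e2 (by positivity) (by positivity)
    have hB0 : (0:ℝ) ≤ (k:ℝ) * ((2*α)^(k-2) * 3) * (2*α-1) := by
      apply mul_nonneg (by positivity) (by linarith)
    calc r * ((k:ℝ) * (1-z)^2 / (2*z) * ((k:ℝ) * ((2*α)^(k-2) * 3) * (2*α-1)))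
        = (r * ((k:ℝ)*(1-z)^2/(2*z))) * ((k:ℝ) * ((2*α)^(k-2) * 3) * (2*α-1)) := by ring
      _ ≤ ((32/2^k) * (k:ℝ)) * ((k:ℝ) * ((2*α)^(k-2) * 3) * (2*α-1)) :=
          mul_le_mul_of_nonneg_right hrkz hB0
      _ = (32/2^k) * ((k:ℝ) * ((k:ℝ) * ((2*α)^(k-2) * 3) * (2*α-1))) := by ring
  have step3 : (32/2^k) * ((k:ℝ) * ((k:ℝ) * ((2*α)^(k-2) * 3) * (2*α-1)))
      = 24 * (k:ℝ)^2 * α^(k-2) * (2*α-1) := by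
    rw [mul_pow, h2k4]
    have h2pos : (0:ℝ) < (2:ℝ)^(k-2) := by positivity
    field_simp
    ring
  have step4 : 24 * (k:ℝ)^2 * α^(k-2) * (2*α-1) ≤ 24 * (k:ℝ)^2 * (2/(k:ℝ)^3) * (2*α-1) := by
    apply mul_le_mul_of_nonneg_right _ (by linarith)
    apply mul_le_mul_of_nonneg_left hαk (by positivity)
  have step5 : 24 * (k:ℝ)^2 * (2/(k:ℝ)^3) * (2*α-1) = 96*(α - 1/2)/(k:ℝ) := by
    field_simp
    ring
  linarith [step1, step2, step3.le, step3.ge, step4, step5.le, step5.ge]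


lemma rddpp_half_bound {k : ℕ} (hk : 512 ≤ k) {z r : ℝ} (hz0 : 0 < z) (hz1 : z < 1)
    (hw : (1-z) ≤ 4/2^k) (hr0 : 0 < r) (hrw : r * (1-z)^2 ≤ 32/2^k) :
    r * ddppA k z ((1-z)*(1+z)^(k-1)) (1/2) < 2 := by
  obtain ⟨hz34, hzk, hzinv, hP3⟩ := z_facts hk hz0 hz1 hw
  have hkR : (512:ℝ) ≤ (k:ℝ) := by exact_mod_cast hk
  have hkpos : (0:ℝ) < (k:ℝ) := by linarith
  have hk4 : (k:ℝ)^4 ≤ 2^k := nat_pow4_le_two_pow (by omega)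
  have h2k : (0:ℝ) < (2:ℝ)^k := by positivity
  have hzne : z ≠ 0 := ne_of_gt hz0
  have hzipos : (0:ℝ) < z⁻¹ := inv_pos.mpr hz0
  have hw0 : (0:ℝ) ≤ 1 - z := by linarith
  have hdη0 : (0:ℝ) ≤ (1-z)*(1+z)^(k-1) := by positivity
  have hdηle : (1-z)*(1+z)^(k-1) ≤ (1-z)*2^(k-1) := by
    apply mul_le_mul_of_nonneg_left _ hw0
    exact pow_le_pow_left₀ (by linarith) (by linarith) _
  have hkk : (k:ℝ) * (((k-1:ℕ)):ℝ) ≤ (k:ℝ)^2 := by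
    have h1 : (((k-1:ℕ)):ℝ) ≤ (k:ℝ) := by exact_mod_cast Nat.sub_le k 1
    nlinarith [hkpos, h1]
  have hkk0 : (0:ℝ) ≤ (k:ℝ) * (((k-1:ℕ)):ℝ) := by positivity
  have hdd : ddppA k z ((1-z)*(1+z)^(k-1)) (1/2) ≤ 11*(k:ℝ)^2*(1-z)^2 := by
    simp only [ddppA]
    -- middle term is nonpositive
    have hb2nn : (0:ℝ) ≤ ((1:ℝ)/2 * z⁻¹ + (1-1/2))/2 := by positivity
    have hmid : 0 ≤ 2*((1-z)*(1+z)^(k-1)) * (((z⁻¹ - 1)/2)^2 *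
        ((k:ℝ) * (((k-1:ℕ)):ℝ) * (((1:ℝ)/2 * z⁻¹ + (1-1/2))/2)^(k-2))) := by
      apply mul_nonneg (by positivity)
      apply mul_nonneg (sq_nonneg _)
      apply mul_nonneg hkk0 (pow_nonneg hb2nn _)
    -- term 1
    have hc1 : (z+z⁻¹)/2 - 1 = (1-z)^2/(2*z) := by field_simp; ring
    have hb1eq : ((1:ℝ)/2 * ((z + z⁻¹)/2) + 1 - 1/2) = (1+z)^2/(4*z) := by
      field_simp; ring
    have hc1sq : ((z+z⁻¹)/2 - 1)^2 ≤ (1-z)^2 := by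
      rw [hc1, div_pow, div_le_iff₀ (by positivity)]
      nlinarith [sq_nonneg (1-z), hz34, hz1, hw0]
    have ht1 : ((z+z⁻¹)/2 - 1)^2 * ((k:ℝ) * (((k-1:ℕ)):ℝ) *
        ((1:ℝ)/2 * ((z + z⁻¹)/2) + 1 - 1/2)^(k-2)) ≤ (1-z)^2 * ((k:ℝ)^2*3) := by
      apply mul_le_mul hc1sq _ _ (sq_nonneg _)
      · rw [hb1eq]
        apply mul_le_mul hkk hP3 (pow_nonneg (by positivity) _) (by positivity)
      · rw [hb1eq]
        apply mul_nonneg hkk0 (pow_nonneg (by positivity) _)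
    -- term 3
    have hd2 : ((1-z)*(1+z)^(k-1))^2 ≤ (1-z)^2*((2:ℝ)^(k-1))^2 := by
      rw [← mul_pow]
      exact pow_le_pow_left₀ hdη0 hdηle 2
    have hc3 : (z⁻¹/2)^2 ≤ 1 := by nlinarith [hzinv, hzipos]
    have hzk2 : (1/2:ℝ) ≤ z^(k-2) := by
      have := pow_le_pow_of_le_one (le_of_lt hz0) (le_of_lt hz1) (Nat.sub_le k 2)
      linarith [hzk, this]
    have hb3 : ((1:ℝ)/2 * z⁻¹/2)^(k-2) ≤ 2/4^(k-2) := by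
      have he : ((1:ℝ)/2 * z⁻¹/2) = z⁻¹/4 := by ring
      rw [he, div_pow, inv_pow]
      have h3 : (z^(k-2))⁻¹ ≤ 2 := by
        rw [inv_le_comm₀ (by positivity) (by norm_num)]
        linarith
      exact div_le_div_of_nonneg_right h3 (by positivity)
    have hb3nn : (0:ℝ) ≤ ((1:ℝ)/2 * z⁻¹/2) := by positivity
    have hinner : (z⁻¹/2)^2 * ((k:ℝ) * (((k-1:ℕ)):ℝ) * ((1:ℝ)/2 * z⁻¹/2)^(k-2))
        ≤ 1 * ((k:ℝ)^2 * (2/4^(k-2))) := by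
      apply mul_le_mul hc3 _ _ (by norm_num)
      · exact mul_le_mul hkk hb3 (pow_nonneg hb3nn _) (by positivity)
      · exact mul_nonneg hkk0 (pow_nonneg hb3nn _)
    have ht3 : ((1-z)*(1+z)^(k-1))^2 * ((z⁻¹/2)^2 *
        ((k:ℝ) * (((k-1:ℕ)):ℝ) * ((1:ℝ)/2 * z⁻¹/2)^(k-2)))
        ≤ ((1-z)^2*((2:ℝ)^(k-1))^2) * (1 * ((k:ℝ)^2 * (2/4^(k-2)))) := by
      apply mul_le_mul hd2 hinner _ (by positivity)
      apply mul_nonneg (sq_nonneg _)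
      exact mul_nonneg hkk0 (pow_nonneg hb3nn _)
    have hpow : ((2:ℝ)^(k-1))^2 * (2/4^(k-2)) = 8 := by
      have h4e : (4:ℝ)^(k-2) = 2^(2*(k-2)) := by
        rw [show (4:ℝ) = 2^2 by norm_num, ← pow_mul]
      have h2e : ((2:ℝ)^(k-1))^2 = 2^(2*(k-2)+2) := by
        rw [← pow_mul]; congr 1; omega
      rw [h2e, h4e, pow_add]
      have hpos : (0:ℝ) < (2:ℝ)^(2*(k-2)) := by positivity
      field_simp
      ring
    have ht3' : ((1-z)*(1+z)^(k-1))^2 * ((z⁻¹/2)^2 *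
        ((k:ℝ) * (((k-1:ℕ)):ℝ) * ((1:ℝ)/2 * z⁻¹/2)^(k-2)))
        ≤ (1-z)^2 * ((k:ℝ)^2*8) := by
      have heq : ((1-z)^2*((2:ℝ)^(k-1))^2) * (1 * ((k:ℝ)^2 * (2/4^(k-2))))
          = (1-z)^2*((k:ℝ)^2*(((2:ℝ)^(k-1))^2 * (2/4^(k-2)))) := by ring
      rw [heq, hpow] at ht3
      linarith [ht3]
    linarith [ht1, hmid, ht3']
  have hr2 : r * ddppA k z ((1-z)*(1+z)^(k-1)) (1/2) ≤ r * (11*(k:ℝ)^2*(1-z)^2) :=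
    mul_le_mul_of_nonneg_left hdd (le_of_lt hr0)
  have h3 : 11*(k:ℝ)^2*(r*(1-z)^2) ≤ 11*(k:ℝ)^2*(32/2^k) :=
    mul_le_mul_of_nonneg_left hrw (by positivity)
  have h512 : (512:ℝ)^2 ≤ (k:ℝ)^2 := pow_le_pow_left₀ (by norm_num) hkR 2
  have hsq : (512:ℝ)^2*(k:ℝ)^2 ≤ (k:ℝ)^4 := by nlinarith [h512, sq_nonneg (k:ℝ)]
  have hk2pos : (0:ℝ) < (k:ℝ)^2 := by positivity
  have h4 : 11*(k:ℝ)^2*(32/2^k) < 2 := by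
    rw [show 11*(k:ℝ)^2*(32/(2:ℝ)^k) = 352*(k:ℝ)^2/2^k by ring, div_lt_iff₀ h2k]
    nlinarith [hk4, hsq, hk2pos]
  have heq2 : r * (11*(k:ℝ)^2*(1-z)^2) = 11*(k:ℝ)^2*(r*(1-z)^2) := by ring
  linarith [hr2, h3, h4, heq2.le, heq2.ge]


/-- Lemma 9 of the paper: for all large `k`, if `0 < r ≤ 2^k ln 2/(1 − q + q ln q)`
then `G_r''(1/2) < 0` and `G_r` is strictly decreasing on `[1/2, 1 − 3 ln k/k]`. -/
theorem G_decreasing :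
    ∃ k0 : ℕ, ∀ k : ℕ, k0 ≤ k → ∀ q : ℝ, 0 ≤ q → q < 1 →
      ∀ u0 γ0 η0 : ℝ, u0 = q * ((2:ℝ)^k)⁻¹ →
        0 < γ0 → γ0 < 1 → 0 < η0 → η0 < 1 →
        1 - η0 = (1 - γ0^2) * (1 + γ0^2)^(k-1) →
        u0 = η0 / ((1 + γ0^2)^k - (1 - η0)) →
        ∀ r : ℝ, 0 < r → r ≤ 2^k * Real.log 2 / (1 - q + q * Real.log q) →
          deriv (deriv (G k u0 r γ0 η0)) (1/2) < 0 ∧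
          StrictAntiOn (G k u0 r γ0 η0)
            (Set.Icc (1/2) (1 - 3 * Real.log k / k)) := by
  use 512
  intro k hk q hq0 hq1 u0 γ0 η0 hu0 hγ0 hγ1 hη0 hη1 h9 h10 r hr0 hr
  have hkR : (512:ℝ) ≤ (k:ℝ) := by exact_mod_cast hk
  have hkpos : (0:ℝ) < (k:ℝ) := by linarith only [hkR]
  have hk4 : (k:ℝ)^4 ≤ 2^k := nat_pow4_le_two_pow (by omega)
  have h2k : (0:ℝ) < (2:ℝ)^k := by positivity
  set z := γ0^2 with hzdef
  have hz0 : 0 < z := by positivity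
  have hz1 : z < 1 := by
    rw [hzdef]
    nlinarith only [hγ0, hγ1]
  have hw0 : (0:ℝ) ≤ 1 - z := by linarith only [hz1]
  have hXpos : (0:ℝ) < (1+z)^(k-1) := by positivity
  have hdenpos : 0 < (1+z)^k - (1-η0) := by
    have h1 : (1:ℝ) < (1+z)^k := one_lt_pow₀ (by linarith only [hz0]) (by omega)
    linarith only [h1, hη0]
  have h10' : u0 * ((1+z)^k - (1-η0)) = η0 := by
    rw [h10]; exact div_mul_cancel₀ _ (ne_of_gt hdenpos)
  have hpowsplit : ((1:ℝ)+z)^k = (1+z)^(k-1) * (1+z) := by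
    rw [← pow_succ]; congr 1; omega
  have hη0eq : η0 = 1 - (1-z)*(1+z)^(k-1) := by linarith only [h9]
  have hBB : (1+z)^(k-1) * ((1-z) + 2*z*u0) = 1 := by
    rw [hpowsplit] at h10'
    linear_combination h10' + (1 - u0) * hη0eq
  have hwltX : (1-z) * (1+z)^(k-1) < 1 := by linarith only [h9, hη0]
  obtain ⟨hkw1, hw4s⟩ := w_bound hk hz0 hz1 hq0 hq1 hu0 hBB hwltX
  have hw4 : (1-z) ≤ 4/2^k := by
    have h1 : 4*(1-q)/2^k ≤ 4/2^k :=
      div_le_div_of_nonneg_right (by linarith only [hq0]) h2k.le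
    linarith only [h1, hw4s]
  have hD : (1-q)^2/2 ≤ 1 - q + q*Real.log q := entropy_lb hq0 hq1
  have hs0 : (0:ℝ) < 1 - q := by linarith only [hq1]
  have hDpos : (0:ℝ) < 1 - q + q*Real.log q := by
    have hsq : (0:ℝ) < (1-q)^2 := by positivity
    linarith only [hD, hsq]
  have hlog2 : Real.log 2 ≤ 1 := by
    have h := Real.log_le_sub_one_of_pos (by norm_num : (0:ℝ) < 2)
    linarith only [h]
  have hrle : r ≤ 2^(k+1)/(1-q)^2 := by
    have h2' : (2:ℝ)^k * Real.log 2/(1 - q + q*Real.log q) ≤ (2:ℝ)^k/((1-q)^2/2) := by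
      apply div_le_div₀ (by positivity) _ (by positivity) hD
      nlinarith only [hlog2, h2k]
    have h3' : (2:ℝ)^k/((1-q)^2/2) = 2^(k+1)/(1-q)^2 := by
      rw [pow_succ]
      field_simp
      ring
    linarith only [hr, h2', h3'.le, h3'.ge]
  have hrw : r * (1-z)^2 ≤ 32/2^k := by
    have hz2 : (1-z)^2 ≤ (4*(1-q)/2^k)^2 := pow_le_pow_left₀ hw0 hw4s 2
    have hstep : r * (1-z)^2 ≤ (2^(k+1)/(1-q)^2) * (4*(1-q)/2^k)^2 := by
      apply mul_le_mul hrle hz2 (sq_nonneg _) (by positivity)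
    have heq : ((2:ℝ)^(k+1)/(1-q)^2) * (4*(1-q)/2^k)^2 = 32/2^k := by
      rw [pow_succ]
      field_simp
      ring
    linarith only [hstep, heq.le, heq.ge]
  have hdη0 : (0:ℝ) ≤ 1 - η0 := by linarith only [hη1]
  have hdηle : (1-η0) ≤ (1-z)*2^(k-1) := by
    rw [h9]
    apply mul_le_mul_of_nonneg_left _ hw0
    exact pow_le_pow_left₀ (by linarith only [hz0]) (by linarith only [hz1]) _
  have hC'pos : (0:ℝ) < η0 ^ (-(2*u0)) := Real.rpow_pos_of_pos hη0 _
  have hppge : ∀ α, 0 ≤ α → α ≤ 1 → 1/2 ≤ ppA k z (1-η0) α :=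
    fun α h0 h1 => ppA_ge_half hk hz0 hz1 hdη0 hdηle hw4 h0 h1
  have hpppos : ∀ α, 0 ≤ α → α ≤ 1 → 0 < ppA k z (1-η0) α :=
    fun α h0 h1 => lt_of_lt_of_le (by norm_num) (hppge α h0 h1)
  have hffeq : ∀ α : ℝ, ff k u0 α γ0 η0 = η0 ^ (-(2*u0)) * ppA k z (1-η0) α :=
    fun α => rfl
  set LL : ℝ → ℝ := fun α => r * Real.log (η0 ^ (-(2*u0)) * ppA k z (1-η0) α)
      - (α * Real.log α + (1-α) * Real.log (1-α)) with hLL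
  set Psi : ℝ → ℝ := fun α => r * (dppA k z (1-η0) α / ppA k z (1-η0) α)
      - (Real.log α - Real.log (1-α)) with hPsi
  have hggeq : ∀ α : ℝ, 0 < α → α < 1 → gg k u0 r α γ0 η0 = Real.exp (LL α) := by
    intro α h0 h1
    have hppos := hpppos α h0.le h1.le
    have hffpos : 0 < ff k u0 α γ0 η0 := by
      rw [hffeq α]; exact mul_pos hC'pos hppos
    have h1α : (0:ℝ) < 1 - α := by linarith only [h1]
    show ff k u0 α γ0 η0 ^ r / (α ^ α * (1-α) ^ (1-α)) = Real.exp (LL α)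
    rw [Real.rpow_def_of_pos hffpos, Real.rpow_def_of_pos h0, Real.rpow_def_of_pos h1α,
      ← Real.exp_add, div_eq_mul_inv, ← Real.exp_neg, ← Real.exp_add]
    congr 1
    rw [hffeq α]
    simp only [hLL]
    ring
  have hLLd : ∀ α : ℝ, 0 < α → α < 1 → HasDerivAt LL (Psi α) α := by
    intro α h0 h1
    have hppos := hpppos α h0.le h1.le
    have h1α : (0:ℝ) < 1 - α := by linarith only [h1]
    have hCppos : 0 < η0 ^ (-(2*u0)) * ppA k z (1-η0) α := mul_pos hC'pos hppos
    have h₁ : HasDerivAt (fun x => Real.log (η0 ^ (-(2*u0)) * ppA k z (1-η0) x))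
        (dppA k z (1-η0) α / ppA k z (1-η0) α) α := by
      have hd := (hasDerivAt_ppA k z (1-η0) α).const_mul (η0 ^ (-(2*u0)))
      have hlog := hd.log (ne_of_gt hCppos)
      convert hlog using 1
      rw [mul_div_mul_left _ _ (ne_of_gt hC'pos)]
    have h₂ : HasDerivAt (fun x : ℝ => x * Real.log x) (Real.log α + 1) α :=
      Real.hasDerivAt_mul_log (ne_of_gt h0)
    have h₃ : HasDerivAt (fun x : ℝ => (1-x) * Real.log (1-x)) (-(Real.log (1-α) + 1)) α := by
      have hinner : HasDerivAt (fun x : ℝ => 1 - x) (-1 : ℝ) α := by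
        simpa using (hasDerivAt_const α (1:ℝ)).fun_sub (hasDerivAt_id α)
      have houter := Real.hasDerivAt_mul_log (ne_of_gt h1α)
      have hcomp := HasDerivAt.comp α houter hinner
      refine hcomp.congr_deriv ?_ <;> ring
    have hsum := (h₁.const_mul r).fun_sub (h₂.fun_add h₃)
    refine hsum.congr_deriv ?_
    simp only [hPsi]
    ring
  have hlogk : Real.log k ≤ (k:ℝ)/11 := logk_le hk
  have hlogkpos : 0 < Real.log k := Real.log_pos (by
    have : (1:ℝ) < 512 := by norm_num
    linarith only [hkR, this])
  have hint1 : 3 * Real.log k / k < 1/2 := by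
    rw [div_lt_iff₀ hkpos]
    linarith only [hlogk, hkpos]
  have hb2 : (1:ℝ)/2 < 1 - 3*Real.log k/k := by linarith only [hint1]
  have hxpos : 0 < 3*Real.log k/k := by positivity
  have hblt1 : 1 - 3*Real.log k/k < 1 := by linarith only [hxpos]
  have hG_eq : ∀ α, 1/2 ≤ α → α ≤ 1 - 3*Real.log k/k → G k u0 r γ0 η0 α = Real.exp (LL α) := by
    intro α ha hb
    have h0 : (0:ℝ) < α := by linarith only [ha]
    have h1 : α < 1 := by linarith only [hb, hxpos]
    show (if 3 * Real.log k / k ≤ α ∧ α ≤ 1 - 3 * Real.log k / k then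
        gg k u0 r α γ0 η0 else gg k u0 r α (Real.sqrt γ0) (Real.sqrt η0)) = Real.exp (LL α)
    rw [if_pos ⟨by linarith only [hint1, ha], hb⟩]
    exact hggeq α h0 h1
  have hPsineg : ∀ α, 1/2 < α → α < 1 - 3*Real.log k/k → Psi α < 0 := by
    intro α ha hb
    have hα1 : α < 1 := by linarith only [hb, hxpos]
    have hα0 : (0:ℝ) < α := by linarith only [ha]
    have hppge' := hppge α (by linarith only [ha]) (le_of_lt hα1)
    have hpp : 0 < ppA k z (1-η0) α := by linarith only [hppge']
    have hlr : 4*(α - 1/2)/3 ≤ Real.log α - Real.log (1-α) := log_ratio_lb ha hα1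
    have hrd : r * dppA k z (1-η0) α ≤ 96*(α - 1/2)/(k:ℝ) := by
      rw [h9]
      exact rdpp_bound hk hz0 hz1 hw4 hr0 hrw ha (le_of_lt hb) hα1
    have hδ : (0:ℝ) < α - 1/2 := by linarith only [ha]
    simp only [hPsi]
    rw [sub_neg, ← mul_div_assoc, div_lt_iff₀ hpp]
    have hchain1 : 96*(α - 1/2)/(k:ℝ) ≤ 96*(α-1/2)/512 :=
      div_le_div_of_nonneg_left (by linarith only [hδ]) (by norm_num) hkR
    have hchain2 : 96*(α-1/2)/512 < 2/3*(α-1/2) := by nlinarith only [hδ]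
    have hrhs : 2/3*(α - 1/2) ≤ (Real.log α - Real.log (1-α)) * ppA k z (1-η0) α := by
      have hlr0 : 0 ≤ Real.log α - Real.log (1-α) := by
        have hnn : (0:ℝ) ≤ 4*(α-1/2)/3 := by positivity
        linarith only [hlr, hnn]
      have hmm := mul_le_mul hlr hppge' (by norm_num) hlr0
      linarith only [hmm]
    linarith only [hrd, hchain1, hchain2, hrhs]
  have hcont : ContinuousOn (fun α => Real.exp (LL α))
      (Set.Icc (1/2:ℝ) (1 - 3*Real.log k/k)) := by
    intro x hx
    obtain ⟨hx1, hx2⟩ := hx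
    have h0 : (0:ℝ) < x := by linarith only [hx1]
    have h1 : x < 1 := by linarith only [hx2, hxpos]
    exact (((hLLd x h0 h1).exp).continuousAt).continuousWithinAt
  have hderivneg : ∀ x ∈ interior (Set.Icc (1/2:ℝ) (1 - 3*Real.log k/k)),
      deriv (fun α => Real.exp (LL α)) x < 0 := by
    intro x hx
    rw [interior_Icc] at hx
    obtain ⟨hx1, hx2⟩ := hx
    have h0 : (0:ℝ) < x := by linarith only [hx1]
    have h1 : x < 1 := by linarith only [hx2, hxpos]
    rw [((hLLd x h0 h1).exp).deriv]
    exact mul_neg_of_pos_of_neg (Real.exp_pos _) (hPsineg x hx1 hx2)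
  have hanti := strictAntiOn_of_deriv_neg (convex_Icc _ _) hcont hderivneg
  constructor
  · have hmem : Set.Ioo (3*Real.log k/k) (1 - 3*Real.log k/k) ∈ nhds (1/2:ℝ) :=
      Ioo_mem_nhds hint1 hb2
    have hGev : G k u0 r γ0 η0 =ᶠ[nhds (1/2:ℝ)] (fun α => Real.exp (LL α)) := by
      filter_upwards [hmem] with x hx
      obtain ⟨hx1, hx2⟩ := hx
      have h0 : (0:ℝ) < x := lt_trans hxpos hx1
      have h1 : x < 1 := by linarith only [hx2, hxpos]
      show (if 3 * Real.log k / k ≤ x ∧ x ≤ 1 - 3 * Real.log k / k then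
          gg k u0 r x γ0 η0 else gg k u0 r x (Real.sqrt γ0) (Real.sqrt η0)) = Real.exp (LL x)
      rw [if_pos ⟨le_of_lt hx1, le_of_lt hx2⟩]
      exact hggeq x h0 h1
    have hmem01 : Set.Ioo (0:ℝ) 1 ∈ nhds (1/2:ℝ) := Ioo_mem_nhds (by norm_num) (by norm_num)
    have hdeq : deriv (fun α => Real.exp (LL α)) =ᶠ[nhds (1/2:ℝ)]
        (fun α => Real.exp (LL α) * Psi α) := by
      filter_upwards [hmem01] with x hx
      exact ((hLLd x hx.1 hx.2).exp).deriv
    have hkey : deriv (deriv (G k u0 r γ0 η0)) (1/2)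
        = deriv (fun α => Real.exp (LL α) * Psi α) (1/2) :=
      (hGev.deriv.trans hdeq).deriv_eq
    rw [hkey]
    have hpph : 0 < ppA k z (1-η0) (1/2) := hpppos (1/2) (by norm_num) (by norm_num)
    have hpphge : 1/2 ≤ ppA k z (1-η0) (1/2) := hppge (1/2) (by norm_num) (by norm_num)
    have hdP : HasDerivAt Psi (r * ((ddppA k z (1-η0) (1/2) * ppA k z (1-η0) (1/2)
        - dppA k z (1-η0) (1/2) * dppA k z (1-η0) (1/2)) / (ppA k z (1-η0) (1/2))^2)
        - ((1/2:ℝ)⁻¹ + (1-(1/2:ℝ))⁻¹)) (1/2) := by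
      have hdiv := (hasDerivAt_dppA k z (1-η0) (1/2)).fun_div
        (hasDerivAt_ppA k z (1-η0) (1/2)) (ne_of_gt hpph)
      have hlog1 : HasDerivAt (fun x : ℝ => Real.log x) (1/2:ℝ)⁻¹ (1/2) :=
        Real.hasDerivAt_log (by norm_num)
      have hinner : HasDerivAt (fun x : ℝ => 1 - x) (-1 : ℝ) (1/2:ℝ) := by
        simpa using (hasDerivAt_const (1/2:ℝ) (1:ℝ)).fun_sub (hasDerivAt_id (1/2:ℝ))
      have hlog2' : HasDerivAt (fun x : ℝ => Real.log (1-x)) ((1-(1/2:ℝ))⁻¹ * (-1)) (1/2) := by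
        have houter := Real.hasDerivAt_log (show (1:ℝ)-(1/2:ℝ) ≠ 0 by norm_num)
        have hcomp := HasDerivAt.comp (1/2:ℝ) houter hinner
        refine hcomp.congr_deriv ?_ <;> ring
      have hsum := (hdiv.const_mul r).fun_sub (hlog1.fun_sub hlog2')
      refine hsum.congr_deriv ?_
      ring
    have hdpp0 : dppA k z (1-η0) (1/2) = 0 := by
      rw [h9]; exact dppA_half (ne_of_gt hz0)
    have hPsihalf : Psi (1/2) = 0 := by
      simp only [hPsi]
      rw [hdpp0]
      norm_num
    have hExpPsi := ((hLLd (1/2) (by norm_num) (by norm_num)).exp).fun_mul hdP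
    rw [hExpPsi.deriv, hPsihalf, hdpp0]
    have hval : (ddppA k z (1-η0) (1/2) * ppA k z (1-η0) (1/2) - 0*0)
        / (ppA k z (1-η0) (1/2))^2 = ddppA k z (1-η0) (1/2) / ppA k z (1-η0) (1/2) := by
      field_simp
      ring
    rw [hval]
    have hbound : r * (ddppA k z (1-η0) (1/2) / ppA k z (1-η0) (1/2)) < 4 := by
      rw [← mul_div_assoc, div_lt_iff₀ hpph]
      have h1 : r * ddppA k z (1-η0) (1/2) < 2 := by
        rw [h9]; exact rddpp_half_bound hk hz0 hz1 hw4 hr0 hrw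
      linarith only [h1, hpphge]
    have hneg : r * (ddppA k z (1-η0) (1/2) / ppA k z (1-η0) (1/2))
        - ((1/2:ℝ)⁻¹ + (1-(1/2:ℝ))⁻¹) < 0 := by
      have hfour : ((1:ℝ)/2)⁻¹ + ((1:ℝ)-1/2)⁻¹ = 4 := by norm_num
      rw [hfour]
      linarith only [hbound]
    have hfin := mul_neg_of_pos_of_neg (Real.exp_pos (LL (1/2))) hneg
    linarith only [hfin]
  · intro x hx y hy hxy
    rw [hG_eq x hx.1 hx.2, hG_eq y hy.1 hy.2]
    exact hanti hx hy hxy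

end
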